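/- arXiv:2303.01984 — 4 statements merged into one kernel-verified Lean document; each statement's English description precedes it below -/
import Mathlib

section
/- Let K be a field of characteristic p > 0 and let L = K(x₁) be an Artin-Schreier extension with x₁^p − x₁ = κ₁ ∈ K, and let σ be a generator of Gal(L/K) with σ(x₁) = x₁ + 1. Then the element S(x₁,1) = (x₁^p + 1 − (x₁+1)^p)/p ∈ L satisfies Tr_{L/K}(S(x₁,1)) = 1. -/
/-- The element `S(x,1) = (x^p + 1 − (x+1)^p)/p`, where the division by `p`
is carried out on the integer coefficients of the Witt polynomial. -/
noncomputable def WittS1 (p : ℕ) {L : Type*} [Field L] (x : L) : L :=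
  -∑ i ∈ Finset.Ioo 0 p, ((p.choose i / p : ℕ) : L) * x ^ i

/-!
The powers `σ ^ k`, `k < p`, send `x₁` to the pairwise distinct elements `x₁ + k`, so they are
`p ≥ #Gal(L/K)` distinct automorphisms: `L/K` is Galois with group `{σ ^ k | k < p}`, and the
trace of `S(x₁,1)` is `∑_{k ∈ 𝔽_p} S(x₁ + k, 1)`. For `0 < i < p` the power sum
`∑_{k ∈ 𝔽_p} (x + k) ^ i` vanishes unless `i = p - 1`, where it equals `-1`; hence only the
coefficient `-(p.choose (p - 1) / p) = -1` of `x ^ (p - 1)` in `S(x,1)` contributes.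
-/

open Finset

theorem ZMod.sum_range_natCast {M : Type*} [AddCommMonoid M] (n : ℕ) [NeZero n]
    (f : ZMod n → M) : ∑ k ∈ range n, f k = ∑ x, f x :=
  sum_nbij' Nat.cast ZMod.val (fun _ _ => mem_univ _) (fun x _ => mem_range.2 (ZMod.val_lt x))
    (fun _ hk => ZMod.val_cast_of_lt (mem_range.1 hk)) (fun x _ => ZMod.natCast_zmod_val x)
    (fun _ _ => rfl)

section CharP

variable {p : ℕ} [Fact p.Prime]

theorem ZMod.sum_pow_card_sub_one : ∑ x : ZMod p, x ^ (p - 1) = -1 := by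
  simp [ZMod.pow_card_sub_one, sum_ite, filter_ne', ZMod.card,
    Nat.cast_sub (Fact.out : p.Prime).one_le]

theorem sum_range_natCast_pow {R : Type*} [Ring R] [CharP R p] {j : ℕ} (hj : j ≤ p - 1) :
    ∑ k ∈ range p, (k : R) ^ j = if j = p - 1 then -1 else 0 := by
  have hZMod : ∑ x : ZMod p, x ^ j = if j = p - 1 then -1 else 0 := by
    split_ifs with h
    · exact h ▸ ZMod.sum_pow_card_sub_one
    · exact FiniteField.sum_pow_lt_card_sub_one (ZMod p) j (by rw [ZMod.card]; omega)
  have := congrArg (ZMod.castHom (dvd_refl p) R) hZMod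
  rw [← ZMod.sum_range_natCast] at this
  simpa [apply_ite] using this

theorem sum_range_add_natCast_pow {R : Type*} [CommRing R] [CharP R p] (x : R) {i : ℕ}
    (hi : i ≤ p - 1) :
    ∑ k ∈ range p, (x + k) ^ i = if i = p - 1 then -1 else 0 := by
  simp_rw [add_pow]
  rw [sum_comm]
  simp_rw [← sum_mul, ← mul_sum, sum_range_natCast_pow (R := R) (le_trans (Nat.sub_le _ _) hi)]
  rw [sum_eq_single 0]
  · simp
  · intro m hm hm0
    rw [if_neg (by rw [mem_range] at hm; omega), mul_zero, zero_mul]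
  · simp

theorem sum_range_wittS1_add_natCast {L : Type*} [Field L] [CharP L p] (x : L) :
    ∑ k ∈ range p, WittS1 p (x + k) = 1 := by
  have hp := (Fact.out : p.Prime).two_le
  simp only [WittS1, sum_neg_distrib]
  rw [sum_comm]
  simp_rw [← mul_sum]
  rw [sum_eq_single_of_mem (p - 1) (mem_Ioo.2 ⟨by omega, by omega⟩)]
  · rw [sum_range_add_natCast_pow x le_rfl, if_pos rfl, Nat.choose_symm (by omega),
      Nat.choose_one_right, Nat.div_self (by omega)]
    simp
  · intro i hi hne
    rw [sum_range_add_natCast_pow x (by rw [mem_Ioo] at hi; omega), if_neg hne, mul_zero]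

end CharP

theorem map_wittS1 {L L' F : Type*} [Field L] [Field L'] [FunLike F L L'] [RingHomClass F L L']
    (f : F) (p : ℕ) (x : L) : f (WittS1 p x) = WittS1 p (f x) := by
  simp [WittS1]

section AlgEquiv

variable {K L : Type*} [Field K] [Field L] [Algebra K L]

theorem AlgEquiv.pow_apply_eq_add_natCast {σ : L ≃ₐ[K] L} {x : L} (hσ : σ x = x + 1) (k : ℕ) :
    (σ ^ k) x = x + k := by
  induction k with
  | zero => simp
  | succ k ih => rw [pow_succ', AlgEquiv.mul_apply, ih, map_add, hσ, map_natCast]; push_cast; ring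

theorem AlgEquiv.bijective_pow_of_apply_eq_add_one [FiniteDimensional K L] {p : ℕ} [CharP L p]
    (hdim : Module.finrank K L = p) {σ : L ≃ₐ[K] L} {x : L} (hσ : σ x = x + 1) :
    Function.Bijective fun k : Fin p => σ ^ (k : ℕ) := by
  have hinj : Function.Injective fun k : Fin p => σ ^ (k : ℕ) := by
    intro a b hab
    have := congrArg (fun τ : L ≃ₐ[K] L => τ x) hab
    simp only [pow_apply_eq_add_natCast hσ, add_right_inj] at this
    exact Fin.ext (CharP.natCast_injOn_Iio L p a.2 b.2 this)
  refine (Fintype.bijective_iff_injective_and_card _).2 ⟨hinj, le_antisymm ?_ ?_⟩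
  · exact Fintype.card_le_of_injective _ hinj
  · exact (Fintype.card_fin p).symm ▸ hdim ▸ AlgEquiv.card_le

theorem Algebra.algebraMap_trace_eq_sum_range_pow_apply [FiniteDimensional K L] {n : ℕ}
    (hdim : Module.finrank K L = n) {σ : L ≃ₐ[K] L}
    (hσ : Function.Bijective fun k : Fin n => σ ^ (k : ℕ)) (a : L) :
    algebraMap K L (Algebra.trace K L a) = ∑ k ∈ range n, (σ ^ k) a := by
  have : IsGalois K L := IsGalois.of_card_aut_eq_finrank K L <| by
    rw [hdim, ← Nat.card_eq_of_bijective _ hσ, Nat.card_eq_fintype_card, Fintype.card_fin]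
  rw [trace_eq_sum_automorphisms, ← Fintype.sum_bijective _ hσ _ _ fun _ => rfl,
    Fin.sum_univ_eq_sum_range (fun k => (σ ^ k) a)]

end AlgEquiv

theorem stmt7_general (p : ℕ) (hp : p.Prime) {K L : Type*} [Field K] [Field L]
    [Algebra K L] [CharP K p]
    (hdim : Module.finrank K L = p)
    (x₁ : L)
    (σ : L ≃ₐ[K] L) (hσ : σ x₁ = x₁ + 1) :
    Algebra.trace K L (WittS1 p x₁) = 1 := by
  have : Fact p.Prime := ⟨hp⟩
  have : CharP L p := charP_of_injective_algebraMap (algebraMap K L).injective p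
  have : FiniteDimensional K L := Module.finite_of_finrank_pos (hdim ▸ hp.pos)
  apply (algebraMap K L).injective
  rw [Algebra.algebraMap_trace_eq_sum_range_pow_apply hdim
    (AlgEquiv.bijective_pow_of_apply_eq_add_one hdim hσ), map_one]
  simp_rw [map_wittS1, AlgEquiv.pow_apply_eq_add_natCast hσ]
  exact sum_range_wittS1_add_natCast x₁

/-- If `L = K(x₁)` is an Artin–Schreier extension of degree `p` with
`x₁^p − x₁ = κ₁ ∈ K`, and `σ` generates `Gal(L/K)` with `σ x₁ = x₁ + 1`,
then `Tr_{L/K}(S(x₁,1)) = 1`. -/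
theorem stmt7 (p : ℕ) (hp : p.Prime) {K L : Type*} [Field K] [Field L]
    [Algebra K L] [CharP K p] [FiniteDimensional K L]
    (hdim : Module.finrank K L = p)
    (x₁ : L) (κ₁ : K) (hx : x₁ ^ p - x₁ = algebraMap K L κ₁)
    (hL : IntermediateField.adjoin K ({x₁} : Set L) = ⊤)
    (σ : L ≃ₐ[K] L) (hσ : σ x₁ = x₁ + 1)
    (hσgen : Subgroup.closure ({σ} : Set (L ≃ₐ[K] L)) = ⊤) :
    Algebra.trace K L (WittS1 p x₁) = 1 :=
  stmt7_general p hp hdim x₁ σ hσ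
end

section
/- Let K be a field of characteristic p > 0, L = K(x₁) with x₁^p − x₁ = κ₁ ∈ K and σ(x₁) = x₁ + 1 generating Gal(L/K). Then (σ−1)S(x₁,κ₁) = ℘(S(x₁,1)), i.e., σ(S(x₁,κ₁)) − S(x₁,κ₁) = S(x₁,1)^p − S(x₁,1). -/
/-- The element `S(x,c) = (x^p + c^p − (x+c)^p)/p`, the division by `p`
being carried out on the integer coefficients of the Witt polynomial. -/
noncomputable def WittS (p : ℕ) {L : Type*} [Field L] (x c : L) : L :=
  -∑ i ∈ Finset.Ioo 0 p, ((p.choose i / p : ℕ) : L) * x ^ i * c ^ (p - i)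

/-!
Write `S(a,b)` for the carry `(a^p + b^p − (a+b)^p)/p`. Since `σ` fixes `κ₁ = x₁^p − x₁` and
moves `x₁` to `x₁ + 1`, the claim is the image under `X ↦ x₁` of an identity in `ℤ[X]`,
`S(X+1, X^p−X) − S(X, X^p−X) = S(X^p, 1) − S(X, 1)`, combined with `S(x,1)^p = S(x^p,1)` in
characteristic `p` (the coefficients of `S` lie in the prime field). The `ℤ[X]` identity may be
checked after multiplying by `p`, where both sides become
`(X+1)^p − X^p − (X^p+1)^p + X^{p²}` because `X + (X^p − X) = X^p`.
-/

open Finset Polynomial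

/-- `WittS` over an arbitrary commutative ring, so that identities can be proved in `ℤ[X]`. -/
def wittCarry (p : ℕ) {R : Type*} [CommRing R] (a b : R) : R :=
  -∑ i ∈ Ioo 0 p, ((p.choose i / p : ℕ) : R) * a ^ i * b ^ (p - i)

section wittCarry

variable {p : ℕ} {R S : Type*} [CommRing R] [CommRing S]

theorem WittS_eq_wittCarry {L : Type*} [Field L] (x c : L) : WittS p x c = wittCarry p x c :=
  rfl

theorem WittS1_eq_wittCarry {L : Type*} [Field L] (x : L) : WittS1 p x = wittCarry p x 1 := by
  simp only [WittS1, wittCarry, one_pow, mul_one]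

theorem map_wittCarry {F : Type*} [FunLike F R S] [RingHomClass F R S] (f : F) (a b : R) :
    f (wittCarry p a b) = wittCarry p (f a) (f b) := by
  simp only [wittCarry, map_neg, map_sum, map_mul, map_pow, map_natCast]

theorem natCast_mul_wittCarry (hp : p.Prime) (a b : R) :
    (p : R) * wittCarry p a b = a ^ p + b ^ p - (a + b) ^ p := by
  rw [add_pow_prime_eq' hp, wittCarry, sum_congr rfl fun i _ => mul_rotate _ _ (b ^ (p - i))]
  ring

theorem wittCarry_pow_char (hp : p.Prime) [CharP R p] (a b : R) :
    wittCarry p a b ^ p = wittCarry p (a ^ p) (b ^ p) := by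
  have : Fact p.Prime := ⟨hp⟩
  have natCast_pow (n : ℕ) : (n : R) ^ p = n := by rw [← frobenius_def, map_natCast]
  simp only [wittCarry, neg_pow, neg_one_pow_char R p, neg_one_mul, sum_pow_char, mul_pow,
    natCast_pow, ← pow_mul, pow_right_comm _ p]

theorem wittCarry_X_add_one_sub_wittCarry (hp : p.Prime) :
    wittCarry p (X + 1 : ℤ[X]) (X ^ p - X) - wittCarry p X (X ^ p - X) =
      wittCarry p (X ^ p) 1 - wittCarry p X 1 := by
  refine mul_left_cancel₀ (Nat.cast_ne_zero.mpr hp.ne_zero : ((p : ℤ[X])) ≠ 0) ?_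
  simp only [mul_sub, natCast_mul_wittCarry hp]
  ring

theorem wittCarry_add_one_sub_wittCarry (hp : p.Prime) (x : R) :
    wittCarry p (x + 1) (x ^ p - x) - wittCarry p x (x ^ p - x) =
      wittCarry p (x ^ p) 1 - wittCarry p x 1 := by
  simpa only [map_sub, map_add, map_pow, map_one, aeval_X, map_wittCarry] using
    congrArg (aeval x) (wittCarry_X_add_one_sub_wittCarry hp)

end wittCarry

theorem stmt8_general (p : ℕ) (hp : p.Prime) {K L : Type*} [Field K] [Field L]
    [Algebra K L] [CharP K p]
    (x₁ : L) (κ₁ : K) (hx : x₁ ^ p - x₁ = algebraMap K L κ₁)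
    (σ : L ≃ₐ[K] L) (hσ : σ x₁ = x₁ + 1) :
    σ (WittS p x₁ (algebraMap K L κ₁)) - WittS p x₁ (algebraMap K L κ₁) =
      (WittS1 p x₁) ^ p - WittS1 p x₁ := by
  have : CharP L p := charP_of_injective_algebraMap (algebraMap K L).injective p
  rw [WittS_eq_wittCarry, map_wittCarry, hσ, AlgEquiv.commutes, ← hx, WittS1_eq_wittCarry,
    wittCarry_pow_char hp, one_pow, wittCarry_add_one_sub_wittCarry hp]

/-- If `L = K(x₁)` with `x₁^p − x₁ = κ₁ ∈ K`, and `σ` generates `Gal(L/K)`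
with `σ x₁ = x₁ + 1`, then `(σ−1)S(x₁,κ₁) = ℘(S(x₁,1))`. -/
theorem stmt8 (p : ℕ) (hp : p.Prime) {K L : Type*} [Field K] [Field L]
    [Algebra K L] [CharP K p]
    (x₁ : L) (κ₁ : K) (hx : x₁ ^ p - x₁ = algebraMap K L κ₁)
    (hL : IntermediateField.adjoin K ({x₁} : Set L) = ⊤)
    (σ : L ≃ₐ[K] L) (hσ : σ x₁ = x₁ + 1)
    (hσgen : Subgroup.closure ({σ} : Set (L ≃ₐ[K] L)) = ⊤) :
    σ (WittS p x₁ (algebraMap K L κ₁)) - WittS p x₁ (algebraMap K L κ₁) =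
      (WittS1 p x₁) ^ p - WittS1 p x₁ :=
  stmt8_general p hp x₁ κ₁ hx σ hσ
end

section
/- Let M/K be a Galois extension of fields of characteristic p > 0 with Galois group generated by σ̄₁, σ̄₂, and let N = M(x) with x^p − x = μ ∈ M and x ∉ M. If (σ̄ᵢ − 1)μ ∈ M^℘ for i = 1,2, then N/K is a Galois extension. -/
/-!
Over `N` the polynomial `f = X ^ p - X - μ` factors as `∏_{a ∈ 𝔽_p} (X - (x + a))`, so `N = M(x)`
is the splitting field of the separable polynomial `f` and `N/M` is Galois. Moreover `f` is
irreducible over `M`: the roots of a monic factor of degree `0 < d < p` would sum to `d • x` plus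
an element of `𝔽_p`, and this sum lies in `M`, so `x ∈ M`. Hence, if `σ μ - μ = m ^ p - m`, then
`x + m` is a root of `σ f` and `σ` extends to an automorphism of `N` with `x ↦ x + m`. The
automorphisms of `M/K` that extend to `N` form a subgroup containing `σ₁, σ₂`, i.e. all of them;
so an element of `N` fixed by `Aut(N/K)` lies in `M` since `N/M` is Galois, and then in `K`
since `M/K` is.
-/

open Polynomial
open scoped IntermediateField

theorem FiniteField.X_pow_card_sub_X_eq_prod (K : Type*) [Field K] [Fintype K] :
    (X ^ Fintype.card K - X : K[X]) = ∏ a : K, (X - C a) := by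
  have hroots := FiniteField.roots_X_pow_card_sub_X K
  rw [← prod_multiset_X_sub_C_of_monic_of_roots_card_eq (p := X ^ Fintype.card K - X), hroots]
  · rfl
  · exact monic_X_pow_sub (by rw [degree_X]; exact_mod_cast Fintype.one_lt_card)
  · rw [hroots, FiniteField.X_pow_card_sub_X_natDegree_eq K Fintype.one_lt_card]
    rfl

theorem exists_ringHom_comp_algebraMap_eq {M N L : Type*} [Field M] [Field N] [CommRing L]
    [Algebra M N] {x : N} (hint : IsIntegral M x) (hN : M⟮x⟯ = ⊤) (φ : M →+* L) {y : L}
    (hy : eval₂ φ y (minpoly M x) = 0) : ∃ Φ : N →+* L, Φ.comp (algebraMap M N) = φ := by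
  let e : AdjoinRoot (minpoly M x) ≃ₐ[M] N :=
    (IntermediateField.adjoinRootEquivAdjoin M hint).trans
      ((IntermediateField.equivOfEq hN).trans IntermediateField.topEquiv)
  refine ⟨(AdjoinRoot.lift φ y hy).comp (e.symm : N →+* AdjoinRoot (minpoly M x)), ?_⟩
  ext z
  simp [AdjoinRoot.algebraMap_eq]

theorem IsGalois.of_restrictNormalHom_surjective {K M N : Type*} [Field K] [Field M] [Field N]
    [Algebra K M] [Algebra M N] [Algebra K N] [IsScalarTower K M N] [FiniteDimensional K M]
    [FiniteDimensional M N] [IsGalois K M] [IsGalois M N]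
    (h : Function.Surjective (AlgEquiv.restrictNormalHom (F := K) (K₁ := N) M)) :
    IsGalois K N := by
  have := FiniteDimensional.trans K M N
  refine IsGalois.of_fixedField_eq_bot K N (eq_bot_iff.mpr fun y hy => ?_)
  have hfix : ∀ τ : N ≃ₐ[K] N, τ y = y := fun τ => hy ⟨τ, Subgroup.mem_top τ⟩
  obtain ⟨z, rfl⟩ := (IsGalois.mem_range_algebraMap_iff_fixed (F := M) y).mpr
    fun τ => hfix (τ.restrictScalars K)
  obtain ⟨w, rfl⟩ := (IsGalois.mem_range_algebraMap_iff_fixed (F := K) z).mpr fun σ => by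
    obtain ⟨τ, rfl⟩ := h σ
    exact (algebraMap M N).injective ((τ.restrictNormal_commutes M z).trans (hfix τ))
  exact ⟨w, IsScalarTower.algebraMap_apply K M N w⟩

namespace Polynomial

section ArtinSchreierPolynomial

variable {R : Type*} [CommRing R] {p : ℕ}

theorem monic_X_pow_sub_X_sub_C (hp : 1 < p) (μ : R) : (X ^ p - X - C μ : R[X]).Monic := by
  monicity!
  simp [hp.le, hp.not_ge]

theorem natDegree_X_pow_sub_X_sub_C [Nontrivial R] (hp : 1 < p) (μ : R) :
    (X ^ p - X - C μ : R[X]).natDegree = p := by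
  compute_degree!
  all_goals simp [hp.le, hp.ne, (zero_lt_one.trans hp).ne']

variable (p)

theorem separable_X_pow_sub_X_sub_C [CharP R p] (μ : R) : (X ^ p - X - C μ : R[X]).Separable := by
  have hder : derivative (X ^ p - X - C μ : R[X]) = -1 := by
    simp [derivative_X_pow, CharP.cast_eq_zero]
  rw [separable_def, hder]
  exact isCoprime_one_right.neg_right

variable [Fact p.Prime] [CharP R p]

theorem X_pow_sub_X_eq_prod : (X ^ p - X : R[X]) = ∏ a : ZMod p, (X - C a.cast) := by
  simpa [Polynomial.map_prod] using
    congrArg (map (ZMod.castHom dvd_rfl R)) (FiniteField.X_pow_card_sub_X_eq_prod (ZMod p))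

theorem X_pow_sub_X_sub_C_eq_prod (x : R) :
    (X ^ p - X - C (x ^ p - x) : R[X]) = ∏ a : ZMod p, (X - C (x + a.cast)) := by
  have h := congrArg (fun f : R[X] => f.comp (X - C x)) (X_pow_sub_X_eq_prod (R := R) p)
  simp only [sub_comp, pow_comp, X_comp, prod_comp, C_comp, sub_pow_char, ← C_pow] at h
  convert h using 1
  · rw [C_sub]
    ring
  · refine Finset.prod_congr rfl fun a _ => ?_
    rw [C_add]
    ring

end ArtinSchreierPolynomial

end Polynomial

section ArtinSchreierExtension

variable {M N : Type*} [Field M] [Field N] [Algebra M N] {p : ℕ} [Fact p.Prime]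
  {μ : M} {x : N}

theorem natDegree_mul_mem_bot_of_map_dvd_prod {g : M[X]} (hg : g.Monic)
    (hgx : g.map (algebraMap M N) ∣ ∏ a : ZMod p, (X - C (x + a.cast))) :
    (g.natDegree : N) * x ∈ (⊥ : IntermediateField M N) := by
  set roots := (g.map (algebraMap M N)).roots
  have hsplit : (g.map (algebraMap M N)).Splits :=
    (Splits.prod fun a _ => Splits.X_sub_C _).of_dvd
      (monic_prod_of_monic _ _ fun a _ => monic_X_sub_C _).ne_zero hgx
  have hroots : ∀ r ∈ roots, r - x ∈ (⊥ : IntermediateField M N) := by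
    intro r hr
    have hprod := (mem_roots'.mp hr).2.dvd hgx
    simp only [IsRoot, eval_prod, Finset.prod_eq_zero_iff, eval_sub, eval_X, eval_C,
      sub_eq_zero] at hprod
    obtain ⟨a, -, rfl⟩ := hprod
    rw [add_sub_cancel_left, ZMod.cast_eq_val]
    exact natCast_mem _ _
  have hcard : roots.card = g.natDegree := by
    rw [splits_iff_card_roots.mp hsplit, natDegree_map]
  have hnext := hsplit.nextCoeff_eq_neg_sum_roots_of_monic (hg.map _)
  rw [nextCoeff_map (algebraMap M N).injective] at hnext
  have hsum : (g.natDegree : N) * x = roots.sum - (roots.map (· - x)).sum := by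
    rw [Multiset.sum_map_sub, Multiset.map_id', Multiset.map_const', Multiset.sum_replicate,
      hcard, nsmul_eq_mul]
    ring
  rw [hsum, ← neg_eq_iff_eq_neg.mpr hnext]
  exact sub_mem (neg_mem (algebraMap_mem _ _)) (multiset_sum_mem _
    (Multiset.forall_mem_map_iff.mpr hroots))

variable [CharP M p]

theorem map_X_pow_sub_X_sub_C_eq_prod (hx : x ^ p - x = algebraMap M N μ) :
    (X ^ p - X - C μ).map (algebraMap M N) = ∏ a : ZMod p, (X - C (x + a.cast)) := by
  have := charP_of_injective_algebraMap (algebraMap M N).injective p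
  simp only [Polynomial.map_sub, Polynomial.map_pow, map_X, map_C, ← hx,
    X_pow_sub_X_sub_C_eq_prod]

theorem aeval_X_pow_sub_X_sub_C (hx : x ^ p - x = algebraMap M N μ) :
    aeval x (X ^ p - X - C μ) = 0 := by
  rw [aeval_def, eval₂_eq_eval_map, map_X_pow_sub_X_sub_C_eq_prod hx, eval_prod]
  exact Finset.prod_eq_zero (Finset.mem_univ 0) (by simp)

theorem isIntegral_of_pow_sub_self_eq (hx : x ^ p - x = algebraMap M N μ) : IsIntegral M x :=
  ⟨_, monic_X_pow_sub_X_sub_C (Nat.Prime.one_lt Fact.out) μ, aeval_X_pow_sub_X_sub_C hx⟩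

theorem minpoly_eq_X_pow_sub_X_sub_C (hx : x ^ p - x = algebraMap M N μ)
    (hxM : x ∉ (⊥ : IntermediateField M N)) : minpoly M x = X ^ p - X - C μ := by
  have := charP_of_injective_algebraMap (algebraMap M N).injective p
  have hp : 1 < p := Nat.Prime.one_lt Fact.out
  have hint := isIntegral_of_pow_sub_self_eq hx
  have hmonic := minpoly.monic hint
  have hdvd : minpoly M x ∣ X ^ p - X - C μ := minpoly.dvd M x (aeval_X_pow_sub_X_sub_C hx)
  have hmem := natDegree_mul_mem_bot_of_map_dvd_prod hmonic
    (map_X_pow_sub_X_sub_C_eq_prod hx ▸ Polynomial.map_dvd _ hdvd)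
  refine eq_of_monic_of_associated hmonic (monic_X_pow_sub_X_sub_C hp μ)
    (associated_of_dvd_of_natDegree_le hdvd (monic_X_pow_sub_X_sub_C hp μ).ne_zero ?_)
  rw [natDegree_X_pow_sub_X_sub_C hp]
  by_contra! hlt
  have hd : ((minpoly M x).natDegree : N) ≠ 0 := by
    rw [Ne, CharP.cast_eq_zero_iff N p]
    exact fun hdvd => hlt.not_ge (Nat.le_of_dvd (minpoly.natDegree_pos hint) hdvd)
  have := mul_mem (inv_mem (natCast_mem (⊥ : IntermediateField M N) (minpoly M x).natDegree)) hmem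
  exact hxM (by rwa [inv_mul_cancel_left₀ hd] at this)

theorem isSplittingField_X_pow_sub_X_sub_C (hx : x ^ p - x = algebraMap M N μ)
    (hN : M⟮x⟯ = ⊤) : IsSplittingField M N (X ^ p - X - C μ) := by
  refine isSplittingField_iff_intermediateField.mpr ⟨?_, eq_top_iff.mpr (hN ▸ ?_)⟩
  · rw [map_X_pow_sub_X_sub_C_eq_prod hx]
    exact Splits.prod fun a _ => Splits.X_sub_C _
  · refine IntermediateField.adjoin.mono _ _ _ (Set.singleton_subset_iff.mpr ?_)
    exact (mem_rootSet_of_ne (monic_X_pow_sub_X_sub_C (Nat.Prime.one_lt Fact.out) μ).ne_zero).mpr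
      (aeval_X_pow_sub_X_sub_C hx)

variable {K : Type*} [Field K] [Algebra K M] [Algebra K N] [IsScalarTower K M N]

theorem mem_range_restrictNormalHom_of_sub_eq_pow_sub [Normal K M] [FiniteDimensional K N]
    (hx : x ^ p - x = algebraMap M N μ) (hxM : x ∉ (⊥ : IntermediateField M N))
    (hN : M⟮x⟯ = ⊤) {σ : M ≃ₐ[K] M} (hσ : ∃ m : M, σ μ - μ = m ^ p - m) :
    σ ∈ (AlgEquiv.restrictNormalHom (K₁ := N) M).range := by
  have := charP_of_injective_algebraMap (algebraMap M N).injective p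
  obtain ⟨m, hm⟩ := hσ
  have hroot : eval₂ ((algebraMap M N).comp (σ : M →+* M)) (x + algebraMap M N m)
      (minpoly M x) = 0 := by
    have hσμ : σ μ = μ + (m ^ p - m) := by rw [← hm]; ring
    rw [minpoly_eq_X_pow_sub_X_sub_C hx hxM]
    simp only [eval₂_sub, eval₂_pow, eval₂_X, eval₂_C, RingHom.comp_apply, RingHom.coe_coe, hσμ,
      map_add, map_sub, map_pow, add_pow_char, ← hx]
    ring
  obtain ⟨Φ, hΦ⟩ :=
    exists_ringHom_comp_algebraMap_eq (isIntegral_of_pow_sub_self_eq hx) hN _ hroot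
  have hΦσ : ∀ z, Φ (algebraMap M N z) = algebraMap M N (σ z) := RingHom.congr_fun hΦ
  let τ : N →ₐ[K] N :=
    { toRingHom := Φ
      commutes' := fun c => by
        rw [IsScalarTower.algebraMap_apply K M N]
        exact (hΦσ _).trans (congrArg _ (σ.commutes c)) }
  refine ⟨AlgEquiv.ofBijective τ (Algebra.IsAlgebraic.algHom_bijective τ),
    AlgEquiv.ext fun z => (algebraMap M N).injective ?_⟩
  exact (AlgEquiv.restrictNormal_commutes _ M z).trans (hΦσ z)

end ArtinSchreierExtension

/-- Let `M/K` be a Galois extension of fields of characteristic `p > 0` with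
Galois group generated by `σ̄₁, σ̄₂`, and let `N = M(x)` with `x^p − x = μ ∈ M`,
`x ∉ M`. If `(σ̄ᵢ − 1)μ ∈ M^℘` for `i = 1,2`, then `N/K` is Galois. -/
theorem stmt11 (p : ℕ) (hp : p.Prime) {K M N : Type*} [Field K] [Field M]
    [Field N] [Algebra K M] [Algebra M N] [Algebra K N] [IsScalarTower K M N]
    [CharP K p] [FiniteDimensional K M] [IsGalois K M]
    (σ₁ σ₂ : M ≃ₐ[K] M)
    (hgen : Subgroup.closure ({σ₁, σ₂} : Set (M ≃ₐ[K] M)) = ⊤)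
    (μ : M) (x : N) (hx : x ^ p - x = algebraMap M N μ)
    (hxM : x ∉ Set.range (algebraMap M N))
    (hN : IntermediateField.adjoin M ({x} : Set N) = ⊤)
    (h1 : ∃ m : M, σ₁ μ - μ = m ^ p - m)
    (h2 : ∃ m : M, σ₂ μ - μ = m ^ p - m) :
    IsGalois K N := by
  have := Fact.mk hp
  have := charP_of_injective_algebraMap (algebraMap K M).injective p
  have := isSplittingField_X_pow_sub_X_sub_C hx hN
  have : IsGalois M N := IsGalois.of_separable_splitting_field (separable_X_pow_sub_X_sub_C p μ)
  have := IsSplittingField.finiteDimensional N (X ^ p - X - C μ)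
  have := FiniteDimensional.trans K M N
  have hxM' : x ∉ (⊥ : IntermediateField M N) := by rwa [IntermediateField.mem_bot]
  refine IsGalois.of_restrictNormalHom_surjective (M := M) (MonoidHom.range_eq_top.mp ?_)
  rw [eq_top_iff, ← hgen, Subgroup.closure_le, Set.insert_subset_iff, Set.singleton_subset_iff]
  exact ⟨mem_range_restrictNormalHom_of_sub_eq_pow_sub hx hxM' hN h1,
    mem_range_restrictNormalHom_of_sub_eq_pow_sub hx hxM' hN h2⟩
end

section
/- Let K be a complete discretely valued field of characteristic p. For any integer i < 0, the map ℘ induces an isomorphism of additive groups M_K^i/M_K^{i+1} → M_K^{pi}/M_K^{pi+1}, and for i > 0 an isomorphism M_K^i/M_K^{i+1} → M_K^i/M_K^{i+1}; for i = 0 the induced map on O_K/M_K has kernel F_p. -/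
/-!
If `v x = i < 0`, the term `x ^ p` dominates in `x ^ p - x`, so `v (x ^ p - x) = p i`; if
`v x = i > 0`, the term `x` dominates, so `v (x ^ p - x) = i`. This gives the graded maps and
their injectivity. For `i > 0`, `-y` is a preimage of `y` since `(-y) ^ p` lies deeper. For
`i < 0`, write `y = w t ^ p` with `v t = i`; the perfect residue field gives `z` with
`z ^ p ≡ w`, and then `z t` is a preimage. On `O_K / M_K`, `x ^ p - x = ∏_{a ∈ 𝔽_p} (x - a)`.
-/

/-- A normalized (surjective onto `ℤ`) discrete valuation on a field `K`,
with respect to which `K` is complete: the data of `v = v_K` together with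
the usual valuation axioms, surjectivity, and adic completeness. -/
structure DVal (K : Type*) [Field K] where
  v : K → WithTop ℤ
  v_zero : v 0 = ⊤
  v_ne_top : ∀ x : K, x ≠ 0 → v x ≠ ⊤
  v_mul : ∀ x y : K, v (x * y) = v x + v y
  v_add : ∀ x y : K, min (v x) (v y) ≤ v (x + y)
  v_surj : ∀ n : ℤ, ∃ x : K, v x = (n : WithTop ℤ)
  complete : ∀ f : ℕ → K,
    (∀ n : ℕ, ((n : ℤ) : WithTop ℤ) ≤ v (f (n + 1) - f n)) →
    ∃ x : K, ∀ n : ℕ, ((n : ℤ) : WithTop ℤ) ≤ v (x - f n)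

open Polynomial in
theorem pow_char_sub_self_eq_prod (p : ℕ) [Fact p.Prime] {R : Type*} [CommRing R] [CharP R p]
    (x : R) : x ^ p - x = ∏ a : ZMod p, (x - (a.val : R)) := by
  have hroots := FiniteField.roots_X_pow_card_sub_X (ZMod p)
  rw [ZMod.card] at hroots
  have hfactor : (X ^ p - X : (ZMod p)[X]) = ∏ a : ZMod p, (X - C a) := by
    have hmonic : (X ^ p - X : (ZMod p)[X]).Monic :=
      monic_X_pow_sub (by rw [degree_X]; exact_mod_cast (Fact.out : p.Prime).one_lt)
    rw [← prod_multiset_X_sub_C_of_monic_of_roots_card_eq hmonic, hroots]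
    · rfl
    · rw [hroots, FiniteField.X_pow_card_sub_X_natDegree_eq _ (Fact.out : p.Prime).one_lt]
      simp
  simpa only [Polynomial.map_sub, Polynomial.map_pow, map_X, Polynomial.map_prod, map_C, eval_sub,
    eval_pow, eval_X, eval_prod, eval_C, ZMod.castHom_apply, ZMod.natCast_val] using
    congrArg (fun q => eval x (q.map (ZMod.castHom dvd_rfl R))) hfactor

theorem WithTop.coe_add_one_le_of_le_of_ne {a : WithTop ℤ} {i : ℤ} (h : (i : WithTop ℤ) ≤ a)
    (hne : a ≠ i) : ((i + 1 : ℤ) : WithTop ℤ) ≤ a := by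
  induction a with
  | top => exact le_top
  | coe a =>
    norm_cast at h hne ⊢
    omega

namespace DVal

variable {K : Type*} [Field K] (dv : DVal K)

lemma v_one : dv.v 1 = 0 := by
  have h := dv.v_mul 1 1
  rw [mul_one] at h
  lift dv.v 1 to ℤ using dv.v_ne_top 1 one_ne_zero with a
  norm_cast at h ⊢
  omega

def toAddValuation : AddValuation K (WithTop ℤ) :=
  AddValuation.of dv.v dv.v_zero dv.v_one dv.v_add dv.v_mul

lemma v_neg (x : K) : dv.v (-x) = dv.v x := dv.toAddValuation.map_neg x

lemma v_sub (x y : K) : min (dv.v x) (dv.v y) ≤ dv.v (x - y) := dv.toAddValuation.map_sub x y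

lemma v_sub_swap (x y : K) : dv.v (x - y) = dv.v (y - x) := dv.toAddValuation.map_sub_swap x y

lemma v_pow (x : K) (n : ℕ) : dv.v (x ^ n) = n • dv.v x := dv.toAddValuation.map_pow x n

lemma v_add_eq_of_lt {x y : K} (h : dv.v x < dv.v y) : dv.v (x + y) = dv.v x :=
  dv.toAddValuation.map_add_eq_of_lt_left h

lemma v_prod {ι : Type*} (s : Finset ι) (f : ι → K) :
    dv.v (∏ a ∈ s, f a) = ∑ a ∈ s, dv.v (f a) := by
  classical
  induction s using Finset.induction_on with
  | empty => simp [dv.v_one]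
  | insert a s ha ih => rw [Finset.prod_insert ha, Finset.sum_insert ha, dv.v_mul, ih]

lemma v_natCast_nonneg (n : ℕ) : 0 ≤ dv.v (n : K) := by
  induction n with
  | zero => simp [dv.v_zero]
  | succ n ih =>
    push_cast
    exact le_trans (le_min ih dv.v_one.ge) (dv.v_add _ _)

variable {dv}

lemma coe_mul_le_v_pow {x : K} {i : ℤ} (hx : (i : WithTop ℤ) ≤ dv.v x) (n : ℕ) :
    ((n * i : ℤ) : WithTop ℤ) ≤ dv.v (x ^ n) := by
  rw [dv.v_pow, ← nsmul_eq_mul, WithTop.coe_nsmul]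
  exact nsmul_le_nsmul_right hx n

lemma v_pow_of_v_eq {x : K} {i : ℤ} (hx : dv.v x = i) (n : ℕ) :
    dv.v (x ^ n) = ((n * i : ℤ) : WithTop ℤ) := by
  rw [dv.v_pow, hx, ← nsmul_eq_mul, WithTop.coe_nsmul]

variable {n : ℕ} {i : ℤ} {x : K}

lemma coe_mul_le_v_pow_sub_self (hn : 1 ≤ n) (hi : i ≤ 0) (hx : (i : WithTop ℤ) ≤ dv.v x) :
    ((n * i : ℤ) : WithTop ℤ) ≤ dv.v (x ^ n - x) := by
  have hni : ((n * i : ℤ) : WithTop ℤ) ≤ i := WithTop.coe_le_coe.mpr (by nlinarith)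
  exact le_trans (le_min (coe_mul_le_v_pow hx n) (hni.trans hx)) (dv.v_sub _ _)

lemma coe_le_v_pow_sub_self (hn : 1 ≤ n) (hi : 0 ≤ i) (hx : (i : WithTop ℤ) ≤ dv.v x) :
    (i : WithTop ℤ) ≤ dv.v (x ^ n - x) := by
  have hni : (i : WithTop ℤ) ≤ ((n * i : ℤ) : WithTop ℤ) := WithTop.coe_le_coe.mpr (by nlinarith)
  exact le_trans (le_min (hni.trans (coe_mul_le_v_pow hx n)) hx) (dv.v_sub _ _)

lemma v_pow_sub_self_of_neg (hn : 2 ≤ n) (hi : i < 0) (hx : dv.v x = i) :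
    dv.v (x ^ n - x) = ((n * i : ℤ) : WithTop ℤ) := by
  have hlt : dv.v (x ^ n) < dv.v (-x) := by
    rw [dv.v_neg, hx, v_pow_of_v_eq hx]
    exact WithTop.coe_lt_coe.mpr (by nlinarith)
  rw [sub_eq_add_neg, dv.v_add_eq_of_lt hlt, v_pow_of_v_eq hx]

lemma v_pow_sub_self_of_pos (hn : 2 ≤ n) (hi : 0 < i) (hx : dv.v x = i) :
    dv.v (x ^ n - x) = i := by
  have hlt : dv.v (-x) < dv.v (x ^ n) := by
    rw [dv.v_neg, hx, v_pow_of_v_eq hx]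
    exact WithTop.coe_lt_coe.mpr (by nlinarith)
  rw [sub_eq_neg_add, dv.v_add_eq_of_lt hlt, dv.v_neg, hx]

lemma coe_add_one_le_v_of_pow_sub_self_of_neg (hn : 2 ≤ n) (hi : i < 0)
    (hx : (i : WithTop ℤ) ≤ dv.v x)
    (h : ((n * i + 1 : ℤ) : WithTop ℤ) ≤ dv.v (x ^ n - x)) :
    ((i + 1 : ℤ) : WithTop ℤ) ≤ dv.v x := by
  by_contra hlt
  have hxi : dv.v x = i := by_contra fun hne => hlt (WithTop.coe_add_one_le_of_le_of_ne hx hne)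
  rw [v_pow_sub_self_of_neg hn hi hxi] at h
  exact absurd (WithTop.coe_le_coe.mp h) (by omega)

lemma coe_add_one_le_v_of_pow_sub_self_of_pos (hn : 2 ≤ n) (hi : 0 < i)
    (hx : (i : WithTop ℤ) ≤ dv.v x)
    (h : ((i + 1 : ℤ) : WithTop ℤ) ≤ dv.v (x ^ n - x)) :
    ((i + 1 : ℤ) : WithTop ℤ) ≤ dv.v x := by
  by_contra hlt
  have hxi : dv.v x = i := by_contra fun hne => hlt (WithTop.coe_add_one_le_of_le_of_ne hx hne)
  rw [v_pow_sub_self_of_pos hn hi hxi] at h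
  exact absurd (WithTop.coe_le_coe.mp h) (by omega)

lemma exists_pow_sub_self_approx_of_pos (hn : 2 ≤ n) (hi : 0 < i) {y : K}
    (hy : (i : WithTop ℤ) ≤ dv.v y) :
    ∃ x : K, (i : WithTop ℤ) ≤ dv.v x ∧ ((i + 1 : ℤ) : WithTop ℤ) ≤ dv.v (x ^ n - x - y) := by
  refine ⟨-y, by rwa [dv.v_neg], ?_⟩
  rw [show (-y) ^ n - -y - y = (-y) ^ n by ring]
  have hin : ((i + 1 : ℤ) : WithTop ℤ) ≤ ((n * i : ℤ) : WithTop ℤ) :=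
    WithTop.coe_le_coe.mpr (by nlinarith)
  exact hin.trans (coe_mul_le_v_pow (by rwa [dv.v_neg]) n)

lemma exists_pow_sub_self_approx_of_neg (hn : 2 ≤ n) (hi : i < 0)
    (hroot : ∀ w : K, 0 ≤ dv.v w → ∃ z : K, 0 ≤ dv.v z ∧ (1 : WithTop ℤ) ≤ dv.v (w - z ^ n))
    {y : K} (hy : ((n * i : ℤ) : WithTop ℤ) ≤ dv.v y) :
    ∃ x : K, (i : WithTop ℤ) ≤ dv.v x ∧ ((n * i + 1 : ℤ) : WithTop ℤ) ≤ dv.v (x ^ n - x - y) := by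
  obtain ⟨t, ht⟩ := dv.v_surj i
  have ht0 : t ≠ 0 := by
    rintro rfl
    exact WithTop.top_ne_coe (dv.v_zero ▸ ht)
  have htn := v_pow_of_v_eq ht n
  obtain ⟨w, rfl⟩ : ∃ w, y = w * t ^ n := ⟨y / t ^ n, (div_mul_cancel₀ y (pow_ne_zero n ht0)).symm⟩
  have hw : 0 ≤ dv.v w := by
    rw [dv.v_mul, htn] at hy
    exact (WithTop.add_le_add_iff_right WithTop.coe_ne_top).mp (by rwa [zero_add])
  obtain ⟨z, hz, hzw⟩ := hroot w hw
  have hzt : (i : WithTop ℤ) ≤ dv.v (z * t) := by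
    rw [dv.v_mul, ht]
    simpa using add_le_add_left hz (i : WithTop ℤ)
  refine ⟨z * t, hzt, ?_⟩
  rw [show (z * t) ^ n - z * t - w * t ^ n = t ^ n * (z ^ n - w) - z * t by ring]
  refine le_trans (le_min ?_ ?_) (dv.v_sub _ _)
  · rw [dv.v_mul, htn, dv.v_sub_swap, WithTop.coe_add, WithTop.coe_one]
    exact add_le_add_right hzw _
  · exact le_trans (WithTop.coe_le_coe.mpr (by nlinarith)) hzt

lemma one_le_v_pow_char_sub_self_iff (p : ℕ) [Fact p.Prime] [CharP K p] (hx : 0 ≤ dv.v x) :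
    (1 : WithTop ℤ) ≤ dv.v (x ^ p - x) ↔ ∃ m : ℕ, m < p ∧ (1 : WithTop ℤ) ≤ dv.v (x - m) := by
  constructor
  · intro h
    by_contra! hnone
    have hfactor : ∀ a : ZMod p, dv.v (x - a.val) = 0 := fun a => by_contra fun hne =>
      (hnone a.val a.val_lt).not_ge <| by
        simpa using WithTop.coe_add_one_le_of_le_of_ne (i := 0)
          (le_trans (le_min hx (dv.v_natCast_nonneg _)) (dv.v_sub _ _)) hne
    rw [pow_char_sub_self_eq_prod p x, dv.v_prod, Finset.sum_eq_zero fun a _ => hfactor a] at h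
    exact absurd h (by simp)
  · rintro ⟨m, -, hm⟩
    have hm_fixed : (m : K) ^ p = m := by rw [← frobenius_def, map_natCast]
    rw [show x ^ p - x = (x - m) ^ p - (x - m) by rw [sub_pow_char, hm_fixed]; ring]
    exact_mod_cast coe_le_v_pow_sub_self (dv := dv) (i := 1) (Fact.out : p.Prime).one_lt.le
      zero_le_one (by exact_mod_cast hm)

end DVal

/-- For `i < 0`, `℘` induces an isomorphism `M_K^i/M_K^{i+1} → M_K^{pi}/M_K^{pi+1}`;
for `i > 0` an isomorphism `M_K^i/M_K^{i+1} → M_K^i/M_K^{i+1}`; and for `i = 0`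
the induced map on `O_K/M_K` has kernel `𝔽_p`.  (All statements are phrased
elementwise in terms of the valuation.) -/
theorem stmt13 (p : ℕ) (hp : p.Prime) {K : Type*} [Field K] [CharP K p]
    (dv : DVal K)
    (hperf : ∀ x : K, 0 ≤ dv.v x →
      ∃ y : K, 0 ≤ dv.v y ∧ (1 : WithTop ℤ) ≤ dv.v (x - y ^ p)) :
    (∀ i : ℤ, i < 0 →
      (∀ x : K, (i : WithTop ℤ) ≤ dv.v x →
        ((p * i : ℤ) : WithTop ℤ) ≤ dv.v (x ^ p - x)) ∧
      (∀ x : K, (i : WithTop ℤ) ≤ dv.v x →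
        ((p * i + 1 : ℤ) : WithTop ℤ) ≤ dv.v (x ^ p - x) →
        ((i + 1 : ℤ) : WithTop ℤ) ≤ dv.v x) ∧
      (∀ y : K, ((p * i : ℤ) : WithTop ℤ) ≤ dv.v y →
        ∃ x : K, (i : WithTop ℤ) ≤ dv.v x ∧
          ((p * i + 1 : ℤ) : WithTop ℤ) ≤ dv.v (x ^ p - x - y))) ∧
    (∀ i : ℤ, 0 < i →
      (∀ x : K, (i : WithTop ℤ) ≤ dv.v x →
        (i : WithTop ℤ) ≤ dv.v (x ^ p - x)) ∧
      (∀ x : K, (i : WithTop ℤ) ≤ dv.v x →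
        ((i + 1 : ℤ) : WithTop ℤ) ≤ dv.v (x ^ p - x) →
        ((i + 1 : ℤ) : WithTop ℤ) ≤ dv.v x) ∧
      (∀ y : K, (i : WithTop ℤ) ≤ dv.v y →
        ∃ x : K, (i : WithTop ℤ) ≤ dv.v x ∧
          ((i + 1 : ℤ) : WithTop ℤ) ≤ dv.v (x ^ p - x - y))) ∧
    (∀ x : K, (0 : WithTop ℤ) ≤ dv.v x →
      ((1 : WithTop ℤ) ≤ dv.v (x ^ p - x) ↔
        ∃ n : ℕ, n < p ∧ (1 : WithTop ℤ) ≤ dv.v (x - (n : K)))) := by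
  have := Fact.mk hp
  have hp1 := hp.one_lt.le
  have hp2 := hp.two_le
  refine ⟨fun i hi => ⟨?_, ?_, ?_⟩, fun i hi => ⟨?_, ?_, ?_⟩, ?_⟩
  · exact fun x => DVal.coe_mul_le_v_pow_sub_self hp1 hi.le
  · exact fun x => DVal.coe_add_one_le_v_of_pow_sub_self_of_neg hp2 hi
  · exact fun y => DVal.exists_pow_sub_self_approx_of_neg hp2 hi hperf
  · exact fun x => DVal.coe_le_v_pow_sub_self hp1 hi.le
  · exact fun x => DVal.coe_add_one_le_v_of_pow_sub_self_of_pos hp2 hi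
  · exact fun y => DVal.exists_pow_sub_self_approx_of_pos hp2 hi
  · exact fun x => DVal.one_le_v_pow_char_sub_self_iff p
end
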